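/- Let θ ∈ S, let u, t ∈ R_θ with u a unit satisfying u² = 1 and ut = t, and let C be a cyclic code of length n over R_θ. Then C is a (u,t)-reversible complement cyclic code if and only if C is a reversible cyclic code and the codeword whose polynomial representation is u⁻¹t·(1 + z + z² + ⋯ + z^{n−1}) (the (u,t)-reverse complement of the zero codeword, i.e., the constant word all of whose coordinates equal u⁻¹t) belongs to C. -/

import Mathlib

open Polynomial

abbrev Z4 := ZMod 4

/-- The polynomial `X² - θ(X)` where `θ(X) = a + bX`. -/
noncomputable def thetaPoly (a b : Z4) : Z4[X] := X ^ 2 - (C a + C b * X)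

/-- The ring `R_θ = Z4 + νZ4 = Z4[X]/(X² - θ(X))` with `ν² = θ = a + bν`. -/
abbrev Rtheta (a b : Z4) : Type := Z4[X] ⧸ Ideal.span {thetaPoly a b}

noncomputable instance Rtheta.instCommRing (a b : Z4) : CommRing (Rtheta a b) := inferInstance

/-- The parameter set `S = {0, ν, 2ν, 3ν, 1, 3+2ν, 2+ν, 2+3ν}`, encoded as pairs `(a, b)`
with `θ = a + bν`. For these parameters `R_θ` is a non-chain ring. -/
def Sset : Finset (Z4 × Z4) := {(0,0), (0,1), (0,2), (0,3), (1,0), (3,2), (2,1), (2,3)}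

/-- The `(u, t)`-complement of `r ∈ R_θ`: the unique element `r̄` with `r + u·r̄ = t`,
namely `r̄ = u⁻¹(t - r)`. Here `u` is a unit of `R_θ` (in the applications, `u² = 1` and
`u·t = t`). -/
noncomputable def complE {a b : Z4} (u : (Rtheta a b)ˣ) (t r : Rtheta a b) : Rtheta a b :=
  (↑u⁻¹ : Rtheta a b) * (t - r)

/-- The natural quotient map `R[X] → R[X]/(X^n - 1)`. -/
noncomputable def cyclicMk (R : Type*) [CommRing R] (n : ℕ) :
    R[X] →+* R[X] ⧸ Ideal.span {(X : R[X]) ^ n - 1} :=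
  Ideal.Quotient.mk _

/-- The polynomial representation of a word `(s₀, …, s_{n-1})` in `R[X]/(X^n - 1)`. -/
noncomputable def polyOfWord {R : Type*} [CommRing R] {n : ℕ} (s : Fin n → R) :
    R[X] ⧸ Ideal.span {(X : R[X]) ^ n - 1} :=
  cyclicMk R n (∑ i : Fin n, C (s i) * X ^ (i : ℕ))

/-- A cyclic code (an ideal of `R[X]/(X^n - 1)`) is reversible if whenever the word
`(s₀, …, s_{n-1})` belongs to it, so does the reversed word `(s_{n-1}, …, s₀)`. -/
def IsReversibleCode {R : Type*} [CommRing R] {n : ℕ}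
    (Code : Ideal (R[X] ⧸ Ideal.span {(X : R[X]) ^ n - 1})) : Prop :=
  ∀ s : Fin n → R, polyOfWord s ∈ Code → polyOfWord (fun i => s i.rev) ∈ Code

/-- A cyclic code `C` of length `n` over `R_θ` is a `(u,t)`-reversible complement cyclic code
if for every codeword `(s₀, …, s_{n-1}) ∈ C` the word `(s̄_{n-1}, …, s̄₀)` of
`(u,t)`-complements in reversed order also belongs to `C`. -/
def IsRevComplCode {a b : Z4} {n : ℕ} (u : (Rtheta a b)ˣ) (t : Rtheta a b)
    (Code : Ideal ((Rtheta a b)[X] ⧸ Ideal.span {(X : (Rtheta a b)[X]) ^ n - 1})) : Prop :=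
  ∀ s : Fin n → Rtheta a b, polyOfWord s ∈ Code →
    polyOfWord (fun i => complE u t (s i.rev)) ∈ Code

section aux
variable {R : Type*} [CommRing R] {n : ℕ}

lemma polyOfWord_sub (x y : Fin n → R) :
    polyOfWord (fun i => x i - y i) = polyOfWord x - polyOfWord y := by
  unfold polyOfWord
  rw [← map_sub]
  congr 1
  rw [← Finset.sum_sub_distrib]
  exact Finset.sum_congr rfl fun i _ => by rw [map_sub, sub_mul]

lemma polyOfWord_const_mul (c : R) (s : Fin n → R) :
    polyOfWord (fun i => c * s i) = cyclicMk R n (C c) * polyOfWord s := by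
  simp only [polyOfWord, ← map_mul, Finset.mul_sum]
  congr 1
  apply Finset.sum_congr rfl
  intro i _
  rw [map_mul]
  ring

lemma polyOfWord_zero : polyOfWord (fun _ : Fin n => (0:R)) = 0 := by
  simp [polyOfWord]

end aux

/-- For `θ ∈ S` and `u, t ∈ R_θ` with `u` a unit, `u² = 1` and `u·t = t`, a cyclic code `C`
of length `n` over `R_θ` is a `(u,t)`-reversible complement cyclic code iff `C` is a
reversible cyclic code and the constant word all of whose coordinates equal `u⁻¹t` (the
`(u,t)`-reverse complement of the zero codeword, with polynomial representation
`u⁻¹t·(1 + z + ⋯ + z^{n-1})`) belongs to `C`. -/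
theorem revCompl_iff_reversible_and_zeroCompl_mem {a b : Z4} (h : (a, b) ∈ Sset) {n : ℕ}
    (hn : 0 < n) (u : (Rtheta a b)ˣ) (t : Rtheta a b)
    (hu : (↑u : Rtheta a b) * ↑u = 1) (hut : (↑u : Rtheta a b) * t = t)
    (Code : Ideal ((Rtheta a b)[X] ⧸ Ideal.span {(X : (Rtheta a b)[X]) ^ n - 1})) :
    IsRevComplCode u t Code ↔
      (IsReversibleCode Code ∧
        polyOfWord (fun _ : Fin n => (↑u⁻¹ : Rtheta a b) * t) ∈ Code) := by
  have hinv : (↑u⁻¹ : Rtheta a b) = ↑u := by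
    calc (↑u⁻¹ : Rtheta a b) = ↑u⁻¹ * (↑u * ↑u) := by rw [hu, mul_one]
      _ = (↑u⁻¹ * ↑u) * ↑u := by ring
      _ = ↑u := by rw [u.inv_mul, one_mul]
  constructor
  · intro hC
    have h0 : polyOfWord (fun i : Fin n => complE u t ((fun _ : Fin n => (0 : Rtheta a b)) i.rev)) ∈ Code :=
      hC (fun _ => 0) (by rw [polyOfWord_zero]; exact Code.zero_mem)
    have hconst : polyOfWord (fun _ : Fin n => (↑u⁻¹ : Rtheta a b) * t) ∈ Code := by
      simpa [complE] using h0
    refine ⟨?_, hconst⟩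
    have ht : polyOfWord (fun _ : Fin n => t) ∈ Code := by
      have h2 := Code.mul_mem_left (cyclicMk _ n (C (↑u : Rtheta a b))) hconst
      rw [← polyOfWord_const_mul] at h2
      have he : (fun _ : Fin n => (↑u : Rtheta a b) * (↑u⁻¹ * t)) = fun _ : Fin n => t := by
        funext _; rw [hinv, ← mul_assoc, hu, one_mul]
      rwa [he] at h2
    intro s hs
    have hcompl := hC s hs
    have key : (fun i : Fin n => s i.rev) =
        fun i => t - (↑u : Rtheta a b) * complE u t (s i.rev) := by
      funext i
      simp only [complE]
      rw [hinv, ← mul_assoc, hu]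
      ring
    rw [key, polyOfWord_sub]
    refine Code.sub_mem ht ?_
    rw [polyOfWord_const_mul]
    exact Code.mul_mem_left _ hcompl
  · rintro ⟨hrev, hconst⟩ s hs
    have hr := hrev s hs
    have key : (fun i : Fin n => complE u t (s i.rev)) =
        fun i => (↑u⁻¹ : Rtheta a b) * t - (↑u⁻¹ : Rtheta a b) * s i.rev := by
      funext i; simp [complE, mul_sub]
    rw [key, polyOfWord_sub]
    refine Code.sub_mem hconst ?_
    rw [polyOfWord_const_mul]
    exact Code.mul_mem_left _ hr
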